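/- arXiv:2105.14063 — 3 statements merged into one kernel-verified Lean document; each statement's English description precedes it below -/
import Mathlib

section
/- Let f be a locally integrable function on [0,T]×ℝ^d, let q ∈ [1,∞) with conjugate exponent q', and suppose there is a constant C ≥ 0 such that ∫_{[0,T]×ℝ^d} f(t,x) φ(t,x) dt dx ≤ C ‖φ‖_{L^{q'}([0,T]; L^∞(ℝ^d))} for every compactly supported bounded measurable φ : [0,T]×ℝ^d → ℝ. Then the function t ↦ ‖f(t,·)‖_{L^1(ℝ^d)} belongs to L^q([0,T]) with ‖ t ↦ ‖f(t,·)‖_{L^1} ‖_{L^q([0,T])} ≤ C. -/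
/-! Testing the hypothesis against `φ(t, x) = ψ(t) · sgn f(t, x) · 1_{|x| ≤ R}` gives
`∫ ψ G_R ≤ C ‖ψ‖_{L^{q'}}` for `G_R(t) = ∫_{|x| ≤ R} |f(t, x)| dx` and every bounded
measurable `ψ ≥ 0`. By `L^q`–`L^{q'}` duality, tested on `ψ = min(G_R, m)^{q-1}`, this gives
`‖G_R‖_{L^q} ≤ C`, and monotone convergence in `R` yields the bound for `∫ |f(t, x)| dx`. -/

open MeasureTheory Set
open scoped ENNReal

namespace MeasureTheory

variable {α : Type*} [MeasurableSpace α] {μ : Measure α}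

theorem eLpNorm_iSup_of_monotone {p : ℝ≥0∞} (hp0 : p ≠ 0) (hp : p ≠ ∞) {f : ℕ → α → ℝ≥0∞}
    (hf : ∀ n, Measurable (f n)) (hmono : Monotone f) :
    eLpNorm (fun t => ⨆ n, f n t) p μ = ⨆ n, eLpNorm (f n) p μ := by
  have hr : 0 < p.toReal := ENNReal.toReal_pos hp0 hp
  simp only [eLpNorm_eq_lintegral_rpow_enorm_toReal hp0 hp, enorm_eq_self]
  have hpow := fun t => (ENNReal.orderIsoRpow p.toReal hr).map_iSup (fun n => f n t)
  simp only [ENNReal.orderIsoRpow_apply] at hpow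
  simp only [hpow]
  rw [lintegral_iSup (fun n => (hf n).pow_const _)
    (fun m n hmn t => ENNReal.rpow_le_rpow (hmono hmn t) hr.le)]
  exact (ENNReal.orderIsoRpow (1 / p.toReal) (by positivity)).map_iSup _

theorem lintegral_eq_iSup_setLIntegral_closedBall {E : Type*} [PseudoMetricSpace E]
    [MeasurableSpace E] {ν : Measure E} (x₀ : E) (h : E → ℝ≥0∞) :
    ∫⁻ x, h x ∂ν = ⨆ n : ℕ, ∫⁻ x in Metric.closedBall x₀ n, h x ∂ν := by
  rw [← setLIntegral_iUnion_of_directed h (Monotone.directed_le fun m n hmn =>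
    Metric.closedBall_subset_closedBall (by exact_mod_cast hmn)), Metric.iUnion_closedBall_nat,
    Measure.restrict_univ]

theorem ofReal_integral_integral_mul_indicator_sign {β : Type*} [MeasurableSpace β]
    {ν : Measure β} [SFinite μ] [SFinite ν] {F g : α × β → ℝ} {K : Set (α × β)}
    (hK : MeasurableSet K) (hF : IntegrableOn F K (μ.prod ν)) (hg : Measurable g)
    (hFg : F =ᵐ[μ.prod ν] g) {ψ : α → ℝ} (hψ : Measurable ψ) (hψ0 : ∀ t, 0 ≤ ψ t) {M : ℝ}
    (hψM : ∀ t, ψ t ≤ M) :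
    ENNReal.ofReal (∫ t, ∫ x, F (t, x) *
        K.indicator (fun z => ψ z.1 * if 0 ≤ g z then 1 else -1) (t, x) ∂ν ∂μ) =
      ∫⁻ t, (∫⁻ x, K.indicator (fun z => ‖g z‖ₑ) (t, x) ∂ν) * ENNReal.ofReal (ψ t) ∂μ := by
  set H : α × β → ℝ := K.indicator fun z => ψ z.1 * |g z|
  have hFH : (fun z => F z * K.indicator (fun z => ψ z.1 * if 0 ≤ g z then 1 else -1) z)
      =ᵐ[μ.prod ν] H := by
    filter_upwards [hFg] with z hz
    by_cases hzK : z ∈ K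
    · simp only [H, indicator_of_mem hzK, hz]
      split_ifs with hg0
      · rw [abs_of_nonneg hg0]; ring
      · rw [abs_of_neg (not_le.1 hg0)]; ring
    · simp [H, hzK]
  have hH : Integrable H (μ.prod ν) := by
    refine IntegrableOn.integrable_indicator ?_ hK
    refine ((hF.congr_fun_ae (ae_restrict_of_ae hFg)).abs.bdd_mul
      (hψ.comp measurable_fst).aestronglyMeasurable (c := M) (ae_of_all _ fun z => ?_))
    rw [Real.norm_of_nonneg (hψ0 _)]
    exact hψM _
  have hH0 : ∀ z, 0 ≤ H z := fun z =>
    indicator_nonneg (fun z _ => mul_nonneg (hψ0 _) (abs_nonneg _)) z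
  have hHm : Measurable H := ((hψ.comp measurable_fst).mul hg.abs).indicator hK
  rw [← integral_prod _ (hH.congr hFH.symm), integral_congr_ae hFH,
    ofReal_integral_eq_lintegral_ofReal hH (ae_of_all _ hH0),
    lintegral_prod _ hHm.ennreal_ofReal.aemeasurable]
  refine lintegral_congr fun t => ?_
  rw [← lintegral_mul_const' _ _ ENNReal.ofReal_ne_top]
  refine lintegral_congr fun x => ?_
  by_cases hz : (t, x) ∈ K <;>
    simp [H, hz, ENNReal.ofReal_mul (hψ0 t), Real.enorm_eq_ofReal_abs, mul_comm]

variable [IsFiniteMeasure μ]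

theorem eLpNorm_le_of_lintegral_mul_le_of_bdd {p q : ℝ≥0∞} [hpq : p.HolderConjugate q]
    (hp : p ≠ ∞) (hq : q ≠ ∞) {G : α → ℝ≥0∞} (hG : Measurable G) {m : ℝ≥0∞} (hm : m ≠ ∞)
    (hGm : ∀ t, G t ≤ m) {c : ℝ≥0∞}
    (h : ∀ ψ : α → ℝ, Measurable ψ → (∀ t, 0 ≤ ψ t) → (∃ M, ∀ t, ψ t ≤ M) →
      ∫⁻ t, G t * ENNReal.ofReal (ψ t) ∂μ ≤ c * eLpNorm ψ q μ) :
    eLpNorm G p μ ≤ c := by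
  have hr := ENNReal.HolderConjugate.toReal_of_ne_top hp hq
  set r := p.toReal
  have hr1 : 0 ≤ r - 1 := by linarith [hr.lt]
  set A := ∫⁻ t, G t ^ r ∂μ
  have hA : A ≠ ∞ := by
    refine ne_top_of_le_ne_top (b := ∫⁻ _, m ^ r ∂μ) ?_
      (lintegral_mono fun t => ENNReal.rpow_le_rpow (hGm t) hr.nonneg)
    simpa using
      ENNReal.mul_ne_top (ENNReal.rpow_ne_top_of_nonneg hr.nonneg hm) (measure_ne_top μ _)
  -- the extremal test function for Hölder's inequality
  set ψ : α → ℝ := fun t => (G t ^ (r - 1)).toReal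
  have hψ : ∀ t, ENNReal.ofReal (ψ t) = G t ^ (r - 1) := fun t =>
    ENNReal.ofReal_toReal (ENNReal.rpow_ne_top_of_nonneg hr1 (ne_top_of_le_ne_top hm (hGm t)))
  have hpair : ∫⁻ t, G t * ENNReal.ofReal (ψ t) ∂μ = A := by
    refine lintegral_congr fun t => ?_
    conv_rhs => rw [← add_sub_cancel 1 r, ENNReal.rpow_add_of_nonneg _ _ zero_le_one hr1,
      ENNReal.rpow_one]
    rw [hψ]
  have hnorm : eLpNorm ψ q μ = A ^ (1 / q.toReal) := by
    rw [eLpNorm_eq_lintegral_rpow_enorm_toReal hpq.symm.ne_zero hq]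
    congr 1
    refine lintegral_congr fun t => ?_
    rw [Real.enorm_eq_ofReal ENNReal.toReal_nonneg, hψ, ← ENNReal.rpow_mul, hr.sub_one_mul_conj]
  have hGnorm : eLpNorm G p μ = A ^ (1 / r) := by
    simp [eLpNorm_eq_lintegral_rpow_enorm_toReal hpq.ne_zero hp, A, r]
  have hψM : ∀ t, ψ t ≤ (m ^ (r - 1)).toReal := fun t =>
    ENNReal.toReal_mono (ENNReal.rpow_ne_top_of_nonneg hr1 hm) (ENNReal.rpow_le_rpow (hGm t) hr1)
  have hAle : A ≤ c * A ^ (1 / q.toReal) := by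
    rw [← hnorm, ← hpair]
    exact h ψ (hG.pow_const _).ennreal_toReal (fun t => ENNReal.toReal_nonneg) ⟨_, hψM⟩
  have hsplit : A = A ^ (1 / r) * A ^ (1 / q.toReal) := by
    rw [← ENNReal.rpow_add_of_nonneg _ _ (by positivity) (by positivity), hr.one_div_add_one_div,
      div_one, ENNReal.rpow_one]
  rw [hGnorm]
  rcases eq_or_ne A 0 with hA0 | hA0
  · simp [hA0, ENNReal.zero_rpow_of_pos, hr.pos]
  · exact (ENNReal.mul_le_mul_iff_left (ENNReal.rpow_pos (pos_iff_ne_zero.2 hA0) hA).ne'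
      (ENNReal.rpow_ne_top_of_nonneg (by positivity) hA)).1 (hsplit.symm.trans_le hAle)

theorem eLpNorm_le_of_lintegral_mul_le {p q : ℝ≥0∞} [hpq : p.HolderConjugate q] (hp : p ≠ ∞)
    {G : α → ℝ≥0∞} (hG : Measurable G) {c : ℝ≥0∞}
    (h : ∀ ψ : α → ℝ, Measurable ψ → (∀ t, 0 ≤ ψ t) → (∃ M, ∀ t, ψ t ≤ M) →
      ∫⁻ t, G t * ENNReal.ofReal (ψ t) ∂μ ≤ c * eLpNorm ψ q μ) :
    eLpNorm G p μ ≤ c := by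
  rcases eq_or_ne q ∞ with rfl | hq
  · obtain rfl : p = 1 := le_antisymm
      (not_lt.1 fun h1 => (ENNReal.HolderConjugate.lt_top_iff_one_lt ∞ p).2 h1 |>.ne rfl)
      (ENNReal.HolderConjugate.one_le p ∞)
    have hone : eLpNorm (fun _ => (1 : ℝ)) ∞ μ ≤ 1 := by
      rw [eLpNorm_exponent_top]
      exact eLpNormEssSup_le_of_ae_enorm_bound (ae_of_all _ fun _ => by simp)
    simpa [eLpNorm_one_eq_lintegral_enorm] using
      (h _ measurable_const (fun _ => zero_le_one) ⟨1, fun _ => le_rfl⟩).trans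
        (mul_le_of_le_one_right' hone)
  have htrunc : G = fun t => ⨆ m : ℕ, G t ⊓ m := by
    ext t
    rw [← inf_iSup_eq, ENNReal.iSup_natCast, inf_top_eq]
  rw [htrunc, eLpNorm_iSup_of_monotone (f := fun (m : ℕ) t => G t ⊓ m) hpq.ne_zero hp
    (fun m => hG.inf measurable_const) (fun m n hmn t => inf_le_inf_left _ (Nat.mono_cast hmn))]
  refine iSup_le fun m => eLpNorm_le_of_lintegral_mul_le_of_bdd hp hq (hG.inf measurable_const)
    (ENNReal.natCast_ne_top m) (fun t => inf_le_right) fun ψ hψ hψ0 hψM => ?_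
  exact (lintegral_mono fun t => mul_le_mul_left inf_le_left _).trans (h ψ hψ hψ0 hψM)

end MeasureTheory

theorem lintegral_setLIntegral_closedBall_mul_le {d : ℕ} {T C : ℝ} {q' : ℝ≥0∞}
    {f : ℝ → (Fin d → ℝ) → ℝ}
    (hf : LocallyIntegrable (fun z : ℝ × (Fin d → ℝ) => f z.1 z.2)
      ((volume.restrict (Icc 0 T)).prod volume))
    (hbound : ∀ φ : ℝ → (Fin d → ℝ) → ℝ,
      Measurable (fun z : ℝ × (Fin d → ℝ) => φ z.1 z.2) →
      (∃ M, ∀ t x, |φ t x| ≤ M) →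
      HasCompactSupport (fun z : ℝ × (Fin d → ℝ) => φ z.1 z.2) →
      ∫ t in Icc 0 T, ∫ x, f t x * φ t x ≤
        C * (eLpNorm (fun t => (eLpNorm (φ t) ⊤ volume).toReal) q'
              (volume.restrict (Icc 0 T))).toReal)
    {g : ℝ × (Fin d → ℝ) → ℝ} (hg : Measurable g)
    (hfg : (fun z : ℝ × (Fin d → ℝ) => f z.1 z.2) =ᵐ[(volume.restrict (Icc 0 T)).prod volume] g)
    (R : ℝ) {ψ : ℝ → ℝ} (hψ : Measurable ψ) (hψ0 : ∀ t, 0 ≤ ψ t) (hψM : ∃ M, ∀ t, ψ t ≤ M) :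
    ∫⁻ t, (∫⁻ x in Metric.closedBall 0 R, ‖g (t, x)‖ₑ) * ENNReal.ofReal (ψ t)
        ∂(volume.restrict (Icc 0 T)) ≤
      ENNReal.ofReal C * eLpNorm ψ q' (volume.restrict (Icc 0 T)) := by
  obtain ⟨M, hM⟩ := hψM
  set K := Icc 0 T ×ˢ Metric.closedBall (0 : Fin d → ℝ) R
  have hK : IsCompact K := isCompact_Icc.prod (isCompact_closedBall 0 R)
  set φ : ℝ → (Fin d → ℝ) → ℝ := fun t x =>
    K.indicator (fun z => ψ z.1 * if 0 ≤ g z then 1 else -1) (t, x)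
  have hφψ : ∀ t x, |φ t x| ≤ ψ t := fun t x => by
    by_cases hz : (t, x) ∈ K
    · simp only [φ, indicator_of_mem hz]
      split_ifs <;> simp [abs_of_nonneg (hψ0 t)]
    · simp [φ, hz, hψ0 t]
  have hφ : Measurable (fun z : ℝ × (Fin d → ℝ) => φ z.1 z.2) :=
    ((hψ.comp measurable_fst).mul (Measurable.ite (measurableSet_le measurable_const hg)
      measurable_const measurable_const)).indicator hK.measurableSet
  have hdual := hbound φ hφ ⟨M, fun t x => (hφψ t x).trans (hM t)⟩
    (HasCompactSupport.intro hK fun z hz => indicator_of_notMem hz _)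
  have hnorm : eLpNorm (fun t => (eLpNorm (φ t) ⊤ volume).toReal) q' (volume.restrict (Icc 0 T))
      ≤ eLpNorm ψ q' (volume.restrict (Icc 0 T)) := by
    refine eLpNorm_mono_real fun t => ?_
    rw [Real.norm_of_nonneg ENNReal.toReal_nonneg, eLpNorm_exponent_top]
    exact ENNReal.toReal_le_of_le_ofReal (hψ0 t)
      (eLpNormEssSup_le_of_ae_bound (ae_of_all _ fun x => hφψ t x))
  have hslice : ∀ᵐ t ∂(volume.restrict (Icc 0 T)),
      ∫⁻ x in Metric.closedBall 0 R, ‖g (t, x)‖ₑ = ∫⁻ x, K.indicator (fun z => ‖g z‖ₑ) (t, x) := by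
    filter_upwards [ae_restrict_mem measurableSet_Icc] with t ht
    rw [← lintegral_indicator Metric.isClosed_closedBall.measurableSet]
    refine lintegral_congr fun x => ?_
    by_cases hx : x ∈ Metric.closedBall (0 : Fin d → ℝ) R <;> simp [K, ht, hx]
  calc _ = ∫⁻ t, (∫⁻ x, K.indicator (fun z => ‖g z‖ₑ) (t, x)) * ENNReal.ofReal (ψ t)
        ∂(volume.restrict (Icc 0 T)) := lintegral_congr_ae (hslice.mono fun t ht => by rw [ht])
    _ = ENNReal.ofReal (∫ t in Icc 0 T, ∫ x, f t x * φ t x) :=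
      (ofReal_integral_integral_mul_indicator_sign hK.measurableSet
        (hf.integrableOn_isCompact hK) hg hfg hψ hψ0 hM).symm
    _ ≤ ENNReal.ofReal C * eLpNorm ψ q' (volume.restrict (Icc 0 T)) := by
      refine (ENNReal.ofReal_le_ofReal hdual).trans ?_
      rw [ENNReal.ofReal_mul' ENNReal.toReal_nonneg]
      gcongr
      exact ENNReal.ofReal_toReal_le.trans hnorm

theorem stmt_0_general (d : ℕ) (T : ℝ) (q q' : ℝ≥0∞)
    (hqtop : q ≠ ⊤) (hconj : 1 / q + 1 / q' = 1)
    (C : ℝ)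
    (f : ℝ → (Fin d → ℝ) → ℝ)
    (hf : LocallyIntegrable (fun z : ℝ × (Fin d → ℝ) => f z.1 z.2)
      ((volume.restrict (Set.Icc 0 T)).prod volume))
    (hbound : ∀ φ : ℝ → (Fin d → ℝ) → ℝ,
      Measurable (fun z : ℝ × (Fin d → ℝ) => φ z.1 z.2) →
      (∃ M, ∀ t x, |φ t x| ≤ M) →
      HasCompactSupport (fun z : ℝ × (Fin d → ℝ) => φ z.1 z.2) →
      ∫ t in Set.Icc 0 T, ∫ x, f t x * φ t x ≤
        C * (eLpNorm (fun t => (eLpNorm (φ t) ⊤ volume).toReal) q'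
              (volume.restrict (Set.Icc 0 T))).toReal) :
    eLpNorm (fun t => ∫ x, |f t x|) q (volume.restrict (Set.Icc 0 T))
      ≤ ENNReal.ofReal C := by
  have hqq' : q.HolderConjugate q' :=
    ENNReal.holderConjugate_iff.2 (by simpa only [one_div] using hconj)
  obtain ⟨g, hg, hfg⟩ := hf.aestronglyMeasurable
  set G : ℕ → ℝ → ℝ≥0∞ := fun n t => ∫⁻ x in Metric.closedBall 0 n, ‖g (t, x)‖ₑ
  have hG : ∀ n, Measurable (G n) := fun n => hg.measurable.enorm.lintegral_prod_right'
  have hGmono : Monotone G := fun m n hmn t =>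
    lintegral_mono_set (Metric.closedBall_subset_closedBall (by exact_mod_cast hmn))
  have hfG : ∀ᵐ t ∂(volume.restrict (Icc 0 T)), ‖∫ x, |f t x|‖ₑ ≤ ‖⨆ n, G n t‖ₑ := by
    filter_upwards [Measure.ae_ae_of_ae_prod hfg] with t ht
    calc ‖∫ x, |f t x|‖ₑ ≤ ∫⁻ x, ‖|f t x|‖ₑ := enorm_integral_le_lintegral_enorm _
      _ = ∫⁻ x, ‖g (t, x)‖ₑ := lintegral_congr_ae (ht.mono fun x hx => by simp [← hx])
      _ = ⨆ n, G n t := lintegral_eq_iSup_setLIntegral_closedBall 0 _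
  calc _ ≤ eLpNorm (fun t => ⨆ n, G n t) q (volume.restrict (Icc 0 T)) :=
        eLpNorm_mono_enorm_ae hfG
    _ = ⨆ n, eLpNorm (G n) q (volume.restrict (Icc 0 T)) :=
        eLpNorm_iSup_of_monotone hqq'.ne_zero hqtop hG hGmono
    _ ≤ ENNReal.ofReal C := iSup_le fun n => eLpNorm_le_of_lintegral_mul_le hqtop (hG n)
        fun _ hψ hψ0 hψM =>
          lintegral_setLIntegral_closedBall_mul_le hf hbound hg.measurable hfg n hψ hψ0 hψM

/-- Duality lemma: if `∫∫ f φ ≤ C ‖φ‖_{L^{q'}_T L^∞_x}` for all bounded measurable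
compactly supported `φ`, then `t ↦ ‖f(t,·)‖_{L^1}` is in `L^q([0,T])` with norm `≤ C`. -/
theorem stmt_0 (d : ℕ) (T : ℝ) (hT : 0 < T) (q q' : ℝ≥0∞)
    (hq1 : 1 ≤ q) (hqtop : q ≠ ⊤) (hconj : 1 / q + 1 / q' = 1)
    (C : ℝ) (hC : 0 ≤ C)
    (f : ℝ → (Fin d → ℝ) → ℝ)
    (hf : LocallyIntegrable (fun z : ℝ × (Fin d → ℝ) => f z.1 z.2)
      ((volume.restrict (Set.Icc 0 T)).prod volume))
    (hbound : ∀ φ : ℝ → (Fin d → ℝ) → ℝ,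
      Measurable (fun z : ℝ × (Fin d → ℝ) => φ z.1 z.2) →
      (∃ M, ∀ t x, |φ t x| ≤ M) →
      HasCompactSupport (fun z : ℝ × (Fin d → ℝ) => φ z.1 z.2) →
      ∫ t in Set.Icc 0 T, ∫ x, f t x * φ t x ≤
        C * (eLpNorm (fun t => (eLpNorm (φ t) ⊤ volume).toReal) q'
              (volume.restrict (Set.Icc 0 T))).toReal) :
    eLpNorm (fun t => ∫ x, |f t x|) q (volume.restrict (Set.Icc 0 T))
      ≤ ENNReal.ofReal C :=
  stmt_0_general d T q q' hqtop hconj C f hf hbound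
end

section
/- Let b ∈ L^p(ℝ^d) with p ∈ [1,∞), and let (μ^n) be a sequence of Borel probability measures on ℝ^d converging weakly to a probability measure μ. Then the convolutions b∗μ^n converge to b∗μ in L^p(ℝ^d), i.e. lim_{n→∞} ‖b∗μ^n − b∗μ‖_{L^p} = 0. -/
/-!
Write `f ∗ m` for `x ↦ ∫ f (x - y) dm(y)`. Jensen's inequality and Tonelli give
`‖f ∗ m‖_p ≤ m(G) ‖f‖_p`, so `b` may be replaced by a continuous compactly supported `c`.
Tightness of the limit `ν` yields a compactly supported cutoff `0 ≤ χ ≤ 1` with `∫ (1 - χ) dν`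
small, and by weak convergence `∫ (1 - χ) dμⁿ` is eventually small too. Splitting every measure
as `χ m + (1 - χ) m`, the second part contributes little by the same norm bound, while the
functions `c ∗ (χ μⁿ)` are uniformly bounded, supported in one compact set and converge
pointwise, hence in `L^p` by dominated convergence.
-/

open MeasureTheory Filter Set
open scoped ENNReal NNReal Topology Pointwise

namespace MeasureTheory

variable {α G E : Type*} [MeasurableSpace α] [MeasurableSpace G] [NormedAddCommGroup E]

theorem rpow_lintegral_le_measure_univ_rpow_mul_lintegral_rpow {m : Measure α}
    {g : α → ℝ≥0∞} (hg : AEMeasurable g m) {q : ℝ} (hq : 1 ≤ q) :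
    (∫⁻ y, g y ∂m) ^ q ≤ m univ ^ (q - 1) * ∫⁻ y, g y ^ q ∂m := by
  have hq0 : 0 < q := zero_lt_one.trans_le hq
  have h := eLpNorm_le_eLpNorm_mul_rpow_measure_univ (p := 1) (q := ENNReal.ofReal q)
    (by simpa using ENNReal.ofReal_le_ofReal hq) hg.aestronglyMeasurable
  simp only [eLpNorm_one_eq_lintegral_enorm, enorm_eq_self, ENNReal.toReal_one,
    ENNReal.toReal_ofReal hq0.le, eLpNorm_eq_lintegral_rpow_enorm_toReal
      (ENNReal.ofReal_pos.2 hq0).ne' ENNReal.ofReal_ne_top] at h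
  calc (∫⁻ y, g y ∂m) ^ q
      ≤ ((∫⁻ y, g y ^ q ∂m) ^ (1 / q) * m univ ^ (1 / 1 - 1 / q)) ^ q := by gcongr
    _ = m univ ^ (q - 1) * ∫⁻ y, g y ^ q ∂m := by
      rw [ENNReal.mul_rpow_of_nonneg _ _ hq0.le, ← ENNReal.rpow_mul, ← ENNReal.rpow_mul,
        one_div_mul_cancel hq0.ne', ENNReal.rpow_one, mul_comm]
      congr 2
      field_simp

theorem eLpNorm_add_sub_add_le {μ : Measure α} {p : ℝ≥0∞} (hp : 1 ≤ p) {f f' g g' : α → E}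
    (hf : AEStronglyMeasurable f μ) (hf' : AEStronglyMeasurable f' μ)
    (hg : AEStronglyMeasurable g μ) (hg' : AEStronglyMeasurable g' μ) :
    eLpNorm (f + g - (f' + g')) p μ ≤ eLpNorm (f - f') p μ + eLpNorm g p μ + eLpNorm g' p μ := by
  rw [show f + g - (f' + g') = f - f' + g - g' by abel]
  calc eLpNorm (f - f' + g - g') p μ ≤ eLpNorm (f - f' + g) p μ + eLpNorm g' p μ :=
        eLpNorm_sub_le ((hf.sub hf').add hg) hg' hp
    _ ≤ eLpNorm (f - f') p μ + eLpNorm g p μ + eLpNorm g' p μ := by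
        gcongr
        exact eLpNorm_add_le (hf.sub hf') hg hp

theorem tendsto_eLpNorm_sub_of_dominated {μ : Measure α} {p : ℝ≥0∞} (hp0 : p ≠ 0) (hp : p ≠ ∞)
    {F : ℕ → α → E} {f : α → E} {g : α → ℝ} (hF : ∀ n, AEStronglyMeasurable (F n) μ)
    (hg : MemLp g p μ) (hbound : ∀ n, ∀ᵐ x ∂μ, ‖F n x‖ ≤ g x)
    (hlim : ∀ᵐ x ∂μ, Tendsto (fun n => F n x) atTop (𝓝 (f x))) :
    Tendsto (fun n => eLpNorm (F n - f) p μ) atTop (𝓝 0) := by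
  have hq0 : 0 < p.toReal := ENNReal.toReal_pos hp0 hp
  have hf : AEStronglyMeasurable f μ := aestronglyMeasurable_of_tendsto_ae _ hF hlim
  have hdiff : ∀ n, ∀ᵐ x ∂μ, ‖F n x - f x‖ₑ ^ p.toReal ≤ ‖2 * g x‖ₑ ^ p.toReal := by
    intro n
    filter_upwards [hlim, ae_all_iff.2 hbound] with x hx hxb
    have hfx : ‖f x‖ ≤ g x := le_of_tendsto' hx.norm hxb
    gcongr
    rw [enorm_le_iff_norm_le]
    calc ‖F n x - f x‖ ≤ ‖F n x‖ + ‖f x‖ := norm_sub_le _ _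
      _ ≤ 2 * g x := by linarith [hxb n]
      _ ≤ ‖2 * g x‖ := Real.le_norm_self _
  have hint : Tendsto (fun n => ∫⁻ x, ‖(F n - f) x‖ₑ ^ p.toReal ∂μ) atTop (𝓝 0) := by
    simpa using tendsto_lintegral_of_dominated_convergence' (f := fun _ => 0) _
      (fun n => ((hF n).sub hf).enorm.pow_const _) hdiff
      (lintegral_rpow_enorm_lt_top_of_eLpNorm_lt_top hp0 hp (hg.const_mul 2).2).ne
      (by
        filter_upwards [hlim] with x hx
        simpa [ENNReal.zero_rpow_of_pos hq0] using
          ((hx.sub_const (f x)).enorm.ennrpow_const p.toReal))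
  simp_rw [eLpNorm_eq_lintegral_rpow_enorm_toReal hp0 hp]
  simpa [ENNReal.zero_rpow_of_pos (inv_pos.2 hq0)] using hint.ennrpow_const (1 / p.toReal)

theorem withDensity_ofReal_add_withDensity_ofReal_one_sub (m : Measure α) {χ : α → ℝ}
    (hχ : Measurable χ) (hχ01 : ∀ y, χ y ∈ Icc (0 : ℝ) 1) :
    m.withDensity (fun y => ENNReal.ofReal (χ y))
      + m.withDensity (fun y => ENNReal.ofReal (1 - χ y)) = m := by
  rw [← withDensity_add_left hχ.ennreal_ofReal]
  conv_rhs => rw [← withDensity_one (μ := m)]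
  congr 1
  funext y
  simp [← ENNReal.ofReal_add (hχ01 y).1 (sub_nonneg.2 (hχ01 y).2)]

section Group

variable [AddGroup G] [MeasurableAdd₂ G] [MeasurableNeg G] {μ m : Measure G}
  [SFinite μ] [SFinite m] [μ.IsAddRightInvariant]

theorem lintegral_lintegral_sub {g : G → ℝ≥0∞} (hg : AEMeasurable g μ) :
    ∫⁻ x, ∫⁻ y, g (x - y) ∂m ∂μ = m univ * ∫⁻ x, g x ∂μ := by
  rw [lintegral_lintegral_swap (f := fun x y => g (x - y))
    (hg.comp_quasiMeasurePreserving (quasiMeasurePreserving_sub_of_right_invariant μ m))]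
  simp_rw [lintegral_sub_right_eq_self, lintegral_const, mul_comm]

theorem AEStronglyMeasurable.comp_sub_prod {β : Type*} [TopologicalSpace β] {g : G → β}
    (hg : AEStronglyMeasurable g μ) :
    AEStronglyMeasurable (fun z : G × G => g (z.1 - z.2)) (μ.prod m) :=
  hg.comp_quasiMeasurePreserving (quasiMeasurePreserving_sub_of_right_invariant μ m)

theorem MemLp.ae_integrable_comp_sub [IsFiniteMeasure m] {p : ℝ≥0∞} (hp : 1 ≤ p) (hp' : p ≠ ∞)
    {f : G → E} (hf : MemLp f p μ) : ∀ᵐ x ∂μ, Integrable (fun y => f (x - y)) m := by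
  have hp0 : p ≠ 0 := (zero_lt_one.trans_le hp).ne'
  have hfin : ∫⁻ x, ∫⁻ y, ‖f (x - y)‖ₑ ^ p.toReal ∂m ∂μ ≠ ∞ := by
    rw [lintegral_lintegral_sub (hf.1.enorm.pow_const _)]
    exact ENNReal.mul_ne_top (measure_ne_top _ _)
      (lintegral_rpow_enorm_lt_top_of_eLpNorm_lt_top hp0 hp' hf.2).ne
  have hmeas := (hf.1.comp_sub_prod (m := m)).enorm.pow_const p.toReal
  filter_upwards [ae_lt_top' hmeas.lintegral_prod_right' hfin,
    (hf.1.comp_sub_prod (m := m)).prodMk_left] with x hx hxm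
  exact MemLp.integrable hp
    ⟨hxm, (eLpNorm_lt_top_iff_lintegral_rpow_enorm_lt_top hp0 hp').2 hx⟩

end Group

variable [NormedSpace ℝ E]

noncomputable def convMeasure [Sub G] (f : G → E) (m : Measure G) (x : G) : E :=
  ∫ y, f (x - y) ∂m

theorem convMeasure_add_measure [Sub G] {f : G → E} {m₁ m₂ : Measure G}
    (h : ∀ x, Integrable (fun y => f (x - y)) (m₁ + m₂)) :
    convMeasure f (m₁ + m₂) = convMeasure f m₁ + convMeasure f m₂ :=
  funext fun x => integral_add_measure (h x).left_of_add_measure (h x).right_of_add_measure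

section Group

variable [AddGroup G] [MeasurableAdd₂ G] [MeasurableNeg G] {μ m : Measure G}
  [SFinite μ] [SFinite m] [μ.IsAddRightInvariant] {f g : G → E}

theorem aestronglyMeasurable_convMeasure (hf : AEStronglyMeasurable f μ) :
    AEStronglyMeasurable (convMeasure f m) μ :=
  hf.comp_sub_prod.integral_prod_right'

theorem convMeasure_add_ae [IsFiniteMeasure m] {p : ℝ≥0∞} (hp : 1 ≤ p) (hp' : p ≠ ∞)
    (hf : MemLp f p μ) (hg : MemLp g p μ) :
    convMeasure (f + g) m =ᵐ[μ] convMeasure f m + convMeasure g m := by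
  filter_upwards [hf.ae_integrable_comp_sub (m := m) hp hp',
    hg.ae_integrable_comp_sub (m := m) hp hp'] with x hfx hgx
  exact integral_add hfx hgx

theorem eLpNorm_convMeasure_le [IsFiniteMeasure m] {p : ℝ≥0∞} (hp : 1 ≤ p) (hp' : p ≠ ∞)
    (hf : AEStronglyMeasurable f μ) :
    eLpNorm (convMeasure f m) p μ ≤ m univ * eLpNorm f p μ := by
  have hp0 : p ≠ 0 := (zero_lt_one.trans_le hp).ne'
  set q := p.toReal
  have hq : 1 ≤ q := by simpa using ENNReal.toReal_mono hp' hp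
  have hq0 : 0 < q := zero_lt_one.trans_le hq
  have jensen : ∀ᵐ x ∂μ, ‖convMeasure f m x‖ₑ ^ q ≤
      m univ ^ (q - 1) * ∫⁻ y, ‖f (x - y)‖ₑ ^ q ∂m := by
    filter_upwards [(hf.comp_sub_prod (m := m)).prodMk_left] with x hx
    calc ‖convMeasure f m x‖ₑ ^ q ≤ (∫⁻ y, ‖f (x - y)‖ₑ ∂m) ^ q := by
          gcongr; exact enorm_integral_le_lintegral_enorm _
      _ ≤ _ := rpow_lintegral_le_measure_univ_rpow_mul_lintegral_rpow hx.enorm hq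
  calc eLpNorm (convMeasure f m) p μ = (∫⁻ x, ‖convMeasure f m x‖ₑ ^ q ∂μ) ^ (1 / q) :=
        eLpNorm_eq_lintegral_rpow_enorm_toReal hp0 hp'
    _ ≤ (∫⁻ x, m univ ^ (q - 1) * ∫⁻ y, ‖f (x - y)‖ₑ ^ q ∂m ∂μ) ^ (1 / q) := by
        gcongr ?_ ^ _
        exact lintegral_mono_ae jensen
    _ = (m univ ^ q * ∫⁻ x, ‖f x‖ₑ ^ q ∂μ) ^ (1 / q) := by
        rw [lintegral_const_mul' _ _
            (ENNReal.rpow_ne_top_of_nonneg (by linarith) (measure_ne_top _ _)),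
          lintegral_lintegral_sub (hf.enorm.pow_const q), ← mul_assoc]
        congr 2
        conv_rhs => rw [← sub_add_cancel q 1,
          ENNReal.rpow_add_of_nonneg _ _ (by linarith) zero_le_one, ENNReal.rpow_one]
    _ = m univ * eLpNorm f p μ := by
        rw [ENNReal.mul_rpow_of_nonneg _ _ (by positivity), ← ENNReal.rpow_mul,
          mul_one_div_cancel hq0.ne', ENNReal.rpow_one,
          eLpNorm_eq_lintegral_rpow_enorm_toReal hp0 hp']

theorem eLpNorm_convMeasure_withDensity_le {ν : Measure G} {w : G → ℝ} (hw : Integrable w ν)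
    (hw0 : 0 ≤ᵐ[ν] w) {p : ℝ≥0∞} (hp : 1 ≤ p) (hp' : p ≠ ∞) (hf : AEStronglyMeasurable f μ) :
    eLpNorm (convMeasure f (ν.withDensity fun y => ENNReal.ofReal (w y))) p μ
      ≤ ENNReal.ofReal (∫ y, w y ∂ν) * eLpNorm f p μ := by
  have hmass : ν.withDensity (fun y => ENNReal.ofReal (w y)) univ
      = ENNReal.ofReal (∫ y, w y ∂ν) := by
    rw [withDensity_apply _ MeasurableSet.univ, Measure.restrict_univ,
      ofReal_integral_eq_lintegral_ofReal hw hw0]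
  have : IsFiniteMeasure (ν.withDensity fun y => ENNReal.ofReal (w y)) :=
    ⟨hmass ▸ ENNReal.ofReal_lt_top⟩
  exact hmass ▸ eLpNorm_convMeasure_le hp hp' hf

end Group

def TendstoWeakly [TopologicalSpace G] (m : ℕ → Measure G) (m₀ : Measure G) : Prop :=
  ∀ g : BoundedContinuousFunction G ℝ,
    Tendsto (fun n => ∫ x, g x ∂(m n)) atTop (𝓝 (∫ x, g x ∂m₀))

theorem TendstoWeakly.withDensity [TopologicalSpace G] [OpensMeasurableSpace G]
    {m : ℕ → Measure G} {m₀ : Measure G} (h : TendstoWeakly m m₀)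
    {χ : BoundedContinuousFunction G ℝ} (hχ : ∀ y, 0 ≤ χ y) :
    TendstoWeakly (fun n => (m n).withDensity fun y => ENNReal.ofReal (χ y))
      (m₀.withDensity fun y => ENNReal.ofReal (χ y)) := by
  intro g
  have hmeas : Measurable fun y => ENNReal.ofReal (χ y) := χ.continuous.measurable.ennreal_ofReal
  simp_rw [integral_withDensity_eq_integral_toReal_smul hmeas
    (Eventually.of_forall fun _ => ENNReal.ofReal_lt_top), ENNReal.toReal_ofReal (hχ _),
    smul_eq_mul]
  simpa using h (χ * g)

theorem convMeasure_eq_withDensity_add_withDensity [TopologicalSpace G] [AddGroup G]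
    [IsTopologicalAddGroup G] [OpensMeasurableSpace G] {c : G → ℝ} (hc : Continuous c)
    (hcs : HasCompactSupport c) (m : Measure G) [IsFiniteMeasure m] {χ : G → ℝ}
    (hχ : Measurable χ) (hχ01 : ∀ y, χ y ∈ Icc (0 : ℝ) 1) :
    convMeasure c m = convMeasure c (m.withDensity fun y => ENNReal.ofReal (χ y))
      + convMeasure c (m.withDensity fun y => ENNReal.ofReal (1 - χ y)) := by
  have hm := withDensity_ofReal_add_withDensity_ofReal_one_sub m hχ hχ01
  obtain ⟨C, hC⟩ := hcs.exists_bound_of_continuous hc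
  conv_lhs => rw [← hm]
  refine convMeasure_add_measure fun x => ?_
  rw [hm]
  exact (BoundedContinuousFunction.ofNormedAddCommGroup (fun y => c (x - y)) (by fun_prop) C
    fun y => hC _).integrable m

section Normed

variable [NormedAddCommGroup G] [ProperSpace G] [BorelSpace G]

theorem exists_cutoff_integral_one_sub_lt (ν : Measure G) [IsFiniteMeasure ν] {δ : ℝ}
    (hδ : 0 < δ) :
    ∃ χ : BoundedContinuousFunction G ℝ, HasCompactSupport χ ∧ (∀ y, χ y ∈ Icc (0 : ℝ) 1) ∧
      ∫ y, (1 - χ y) ∂ν < δ := by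
  obtain ⟨K, hK, hνK⟩ := isTightMeasureSet_iff_exists_isCompact_measure_compl_le.1
    (isTightMeasureSet_singleton (μ := ν)) (ENNReal.ofReal (δ / 2)) (by positivity)
  obtain ⟨χ, hχK, -, hχs, hχ01⟩ :=
    exists_continuous_one_zero_of_isCompact hK isClosed_empty (disjoint_empty K)
  let χ' := BoundedContinuousFunction.ofNormedAddCommGroup χ χ.continuous 1 fun y => by
    rw [Real.norm_of_nonneg (hχ01 y).1]; exact (hχ01 y).2
  refine ⟨χ', hχs, hχ01, ?_⟩
  calc ∫ y, (1 - χ y) ∂ν ≤ ∫ y, Kᶜ.indicator 1 y ∂ν := by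
        refine integral_mono ((1 - χ').integrable ν)
          ((integrable_const 1).indicator hK.measurableSet.compl) fun y => ?_
        by_cases hy : y ∈ K
        · simp [hχK hy, hy]
        · simp [hy, (hχ01 y).1]
    _ = ν.real Kᶜ := integral_indicator_one hK.measurableSet.compl
    _ ≤ δ / 2 := ENNReal.toReal_le_of_le_ofReal (by positivity) (hνK ν rfl)
    _ < δ := half_lt_self hδ

section FiniteOnCompacts

variable {μ : Measure G} [μ.IsAddRightInvariant] [IsFiniteMeasureOnCompacts μ]
  {p : ℝ≥0∞}

theorem tendsto_eLpNorm_convMeasure_sub_of_isCompact (hp0 : p ≠ 0) (hp : p ≠ ∞)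
    {c : G → ℝ} (hc : Continuous c) (hcs : HasCompactSupport c) {K : Set G} (hK : IsCompact K)
    {m : ℕ → Measure G} {m₀ : Measure G} (hm : ∀ n, m n univ ≤ 1) (hmK : ∀ n, m n Kᶜ = 0)
    (hweak : TendstoWeakly m m₀) :
    Tendsto (fun n => eLpNorm (convMeasure c (m n) - convMeasure c m₀) p μ) atTop (𝓝 0) := by
  have : ∀ n, IsFiniteMeasure (m n) := fun n => ⟨(hm n).trans_lt ENNReal.one_lt_top⟩
  obtain ⟨C, hC⟩ := hcs.exists_bound_of_continuous hc
  have hvanish : ∀ n, ∀ x ∉ K + tsupport c, convMeasure c (m n) x = 0 := by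
    intro n x hx
    refine integral_eq_zero_of_ae ?_
    filter_upwards [measure_eq_zero_iff_ae_notMem.1 (hmK n)] with y hy
    refine image_eq_zero_of_notMem_tsupport fun hxy => hx ?_
    exact ⟨y, not_not.1 hy, x - y, hxy, add_sub_cancel _ _⟩
  refine tendsto_eLpNorm_sub_of_dominated hp0 hp
    (fun n => aestronglyMeasurable_convMeasure hc.aestronglyMeasurable)
    (memLp_indicator_const p (hK.add hcs).measurableSet C
      (Or.inr (hK.add hcs).measure_lt_top.ne))
    (fun n => Eventually.of_forall fun x => ?_)
    (Eventually.of_forall fun x => hweak (BoundedContinuousFunction.ofNormedAddCommGroup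
      (fun y => c (x - y)) (by fun_prop) C fun y => hC _))
  by_cases hx : x ∈ K + tsupport c
  · rw [indicator_of_mem hx]
    calc ‖convMeasure c (m n) x‖ ≤ C * (m n).real univ :=
          norm_integral_le_of_norm_le_const (Eventually.of_forall fun y => hC _)
      _ ≤ C * 1 := by
          gcongr
          · exact (norm_nonneg _).trans (hC 0)
          · exact ENNReal.toReal_le_of_le_ofReal zero_le_one (by simpa using hm n)
      _ = C := mul_one C
  · rw [indicator_of_notMem hx, hvanish n x hx, norm_zero]

theorem tendsto_eLpNorm_convMeasure_withDensity_sub (hp0 : p ≠ 0) (hp : p ≠ ∞)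
    {c : G → ℝ} (hc : Continuous c) (hcs : HasCompactSupport c)
    {χ : BoundedContinuousFunction G ℝ} (hχs : HasCompactSupport χ)
    (hχ01 : ∀ y, χ y ∈ Icc (0 : ℝ) 1) {m : ℕ → Measure G} {m₀ : Measure G}
    [∀ n, IsProbabilityMeasure (m n)] (hweak : TendstoWeakly m m₀) :
    Tendsto (fun n => eLpNorm (convMeasure c ((m n).withDensity fun y => ENNReal.ofReal (χ y))
      - convMeasure c (m₀.withDensity fun y => ENNReal.ofReal (χ y))) p μ) atTop (𝓝 0) := by
  set w : G → ℝ≥0∞ := fun y => ENNReal.ofReal (χ y)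
  have hmass (n : ℕ) : (m n).withDensity w univ ≤ 1 := by
    rw [withDensity_apply _ MeasurableSet.univ, Measure.restrict_univ]
    calc ∫⁻ y, w y ∂(m n) ≤ ∫⁻ _, 1 ∂(m n) :=
          lintegral_mono fun y => ENNReal.ofReal_le_one.2 (hχ01 y).2
      _ = 1 := by simp
  have hvanish (n : ℕ) : (m n).withDensity w (tsupport χ)ᶜ = 0 := by
    have : {y | w y ≠ 0} ∩ (tsupport χ)ᶜ = ∅ := eq_empty_iff_forall_notMem.2
      fun y ⟨hy, hy'⟩ => hy' (subset_tsupport χ fun h0 => hy (by simp [w, h0]))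
    rw [withDensity_apply_eq_zero' χ.continuous.measurable.ennreal_ofReal.aemeasurable, this,
      measure_empty]
  exact tendsto_eLpNorm_convMeasure_sub_of_isCompact hp0 hp hc hcs hχs.isCompact hmass hvanish
    (hweak.withDensity fun y => (hχ01 y).1)

theorem tendsto_eLpNorm_convMeasure_sub_of_hasCompactSupport (hp : 1 ≤ p) (hp' : p ≠ ∞)
    {c : G → ℝ} (hc : Continuous c) (hcs : HasCompactSupport c)
    {m : ℕ → Measure G} {m₀ : Measure G} [∀ n, IsProbabilityMeasure (m n)]
    [IsProbabilityMeasure m₀] (hweak : TendstoWeakly m m₀) :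
    Tendsto (fun n => eLpNorm (convMeasure c (m n) - convMeasure c m₀) p μ) atTop (𝓝 0) := by
  rw [ENNReal.tendsto_nhds_zero]
  intro ε hε
  have hε3 : ε / 3 ≠ 0 := (ENNReal.div_pos hε.ne' ENNReal.ofNat_ne_top).ne'
  obtain ⟨δ, hδ, hδε⟩ := ENNReal.exists_nnreal_pos_mul_lt
    (hc.memLp_of_hasCompactSupport (μ := μ) (p := p) hcs).2.ne hε3
  obtain ⟨χ, hχs, hχ01, hχm₀⟩ := exists_cutoff_integral_one_sub_lt m₀ (δ := δ) hδ
  have htail (m' : Measure G) [IsProbabilityMeasure m'] (hm' : ∫ y, (1 - χ y) ∂m' < δ) :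
      eLpNorm (convMeasure c (m'.withDensity fun y => ENNReal.ofReal (1 - χ y))) p μ
        ≤ ε / 3 := by
    calc _ ≤ ENNReal.ofReal (∫ y, (1 - χ y) ∂m') * eLpNorm c p μ :=
          eLpNorm_convMeasure_withDensity_le ((1 - χ).integrable m')
            (Eventually.of_forall fun y => sub_nonneg.2 (hχ01 y).2) hp hp'
            hc.aestronglyMeasurable
      _ ≤ δ * eLpNorm c p μ := by
          rw [← ENNReal.ofReal_coe_nnreal]
          gcongr
      _ ≤ ε / 3 := hδε.le
  have hev : ∀ᶠ n in atTop, ∫ y, (1 - χ y) ∂(m n) < δ :=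
    (hweak (1 - χ)).eventually_lt_const (by simpa using hχm₀)
  have hcore := tendsto_eLpNorm_convMeasure_withDensity_sub (μ := μ)
    (zero_lt_one.trans_le hp).ne' hp' hc hcs hχs hχ01 hweak
  have hcm (m' : Measure G) [SFinite m'] : AEStronglyMeasurable (convMeasure c m') μ :=
    aestronglyMeasurable_convMeasure hc.aestronglyMeasurable
  filter_upwards [hev, ENNReal.tendsto_nhds_zero.1 hcore (ε / 3) (pos_iff_ne_zero.2 hε3)]
    with n hn hn'
  rw [convMeasure_eq_withDensity_add_withDensity hc hcs (m n) χ.continuous.measurable hχ01,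
    convMeasure_eq_withDensity_add_withDensity hc hcs m₀ χ.continuous.measurable hχ01]
  calc _ ≤ _ := eLpNorm_add_sub_add_le hp (hcm _) (hcm _) (hcm _) (hcm _)
    _ ≤ ε / 3 + ε / 3 + ε / 3 := by gcongr; exacts [htail _ hn, htail _ (by simpa using hχm₀)]
    _ = ε := ENNReal.add_thirds ε

end FiniteOnCompacts

theorem tendsto_eLpNorm_convMeasure_sub {μ : Measure G} [μ.IsAddRightInvariant]
    [μ.Regular] {p : ℝ≥0∞} (hp : 1 ≤ p) (hp' : p ≠ ∞)
    {b : G → ℝ} (hb : MemLp b p μ) {m : ℕ → Measure G} {m₀ : Measure G}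
    [∀ n, IsProbabilityMeasure (m n)] [IsProbabilityMeasure m₀] (hweak : TendstoWeakly m m₀) :
    Tendsto (fun n => eLpNorm (convMeasure b (m n) - convMeasure b m₀) p μ) atTop (𝓝 0) := by
  rw [ENNReal.tendsto_nhds_zero]
  intro ε hε
  have hε3 : ε / 3 ≠ 0 := (ENNReal.div_pos hε.ne' ENNReal.ofNat_ne_top).ne'
  obtain ⟨c, hcs, hbc, hc, hcp⟩ := hb.exists_hasCompactSupport_eLpNorm_sub_le hp' hε3
  have hsplit (m' : Measure G) [IsProbabilityMeasure m'] :
      convMeasure b m' =ᵐ[μ] convMeasure c m' + convMeasure (b - c) m' := by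
    simpa using convMeasure_add_ae (m := m') hp hp' hcp (hb.sub hcp)
  have hdiff (m' : Measure G) [IsProbabilityMeasure m'] :
      eLpNorm (convMeasure (b - c) m') p μ ≤ ε / 3 := by
    calc eLpNorm (convMeasure (b - c) m') p μ ≤ m' univ * eLpNorm (b - c) p μ :=
          eLpNorm_convMeasure_le hp hp' (hb.sub hcp).1
      _ ≤ ε / 3 := by rwa [measure_univ, one_mul]
  filter_upwards [ENNReal.tendsto_nhds_zero.1
    (tendsto_eLpNorm_convMeasure_sub_of_hasCompactSupport (μ := μ) hp hp' hc hcs hweak) (ε / 3)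
    (pos_iff_ne_zero.2 hε3)] with n hn
  rw [eLpNorm_congr_ae ((hsplit (m n)).sub (hsplit m₀))]
  calc _ ≤ eLpNorm (convMeasure c (m n) - convMeasure c m₀) p μ
        + eLpNorm (convMeasure (b - c) (m n)) p μ + eLpNorm (convMeasure (b - c) m₀) p μ :=
        eLpNorm_add_sub_add_le hp (aestronglyMeasurable_convMeasure hc.aestronglyMeasurable)
          (aestronglyMeasurable_convMeasure hc.aestronglyMeasurable)
          (aestronglyMeasurable_convMeasure (hb.sub hcp).1)
          (aestronglyMeasurable_convMeasure (hb.sub hcp).1)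
    _ ≤ ε / 3 + ε / 3 + ε / 3 := by gcongr; exacts [hdiff _, hdiff _]
    _ = ε := ENNReal.add_thirds ε

end Normed

end MeasureTheory

/-- If `b ∈ L^p(ℝ^d)` with `p ∈ [1,∞)` and probability measures `μ^n` converge weakly
to `μ`, then `b∗μ^n → b∗μ` in `L^p(ℝ^d)`. -/
theorem stmt_3 (d : ℕ) (p : ℝ) (hp1 : 1 ≤ p)
    (b : (Fin d → ℝ) → ℝ) (hb : MemLp b (ENNReal.ofReal p) volume)
    (μ : ℕ → Measure (Fin d → ℝ)) (ν : Measure (Fin d → ℝ))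
    (hμ : ∀ n, IsProbabilityMeasure (μ n)) (hν : IsProbabilityMeasure ν)
    (hweak : ∀ g : BoundedContinuousFunction (Fin d → ℝ) ℝ,
      Tendsto (fun n => ∫ x, g x ∂(μ n)) atTop (𝓝 (∫ x, g x ∂ν))) :
    Tendsto (fun n =>
        eLpNorm (fun x => (∫ y, b (x - y) ∂(μ n)) - ∫ y, b (x - y) ∂ν)
          (ENNReal.ofReal p) volume)
      atTop (𝓝 0) :=
  tendsto_eLpNorm_convMeasure_sub (by simpa using ENNReal.ofReal_le_ofReal hp1)
    ENNReal.ofReal_ne_top hb hweak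
end

section
/- Let (Ω,F,P) be a probability space, ξ : Ω → ℝ^d a random variable with law admitting a density ρ ∈ L^r(ℝ^d) for some r ∈ (1,∞), W : Ω → ℝ^d a random variable independent of ξ, and X : Ω → ℝ^d another random variable. Suppose there is a probability measure Q equivalent to P with Law_Q(X) = Law_P(ξ + W) and E_Q[(dP/dQ)^m] < ∞ for every m ≥ 1. Then for every r̃ ∈ (1,r) the law of X under P has a density in L^{r̃}(ℝ^d), with ‖Law_P(X)‖_{L^{r̃}} ≤ C(ε) ‖ρ‖_{L^r}^{1/(1+ε)} where ε > 0 is chosen so that r'(1+ε) = r̃' (r', r̃' conjugate exponents) and C(ε) depends on the (1+1/ε)-moment of dP/dQ under Q. -/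
/-!
Under `Q` the variable `X` has the law of `ξ + W`, an average of translates of the density `ρ`,
so Hölder's inequality gives `∫ g d(Law_Q X) ≤ ‖g‖_{r'} ‖ρ‖_r`. Writing `P = Z • Q` with
`Z = dP/dQ` and applying Hölder once more with exponents `(1 + ε, 1 + 1/ε)` turns this into
`∫ g d(Law_P X) ≤ ‖g‖_{r̃'} · C` with `C = ‖ρ‖_r^{1/(1+ε)} ‖Z‖_{L^{1+1/ε}(Q)}`. By
`L^{r̃'}`–`L^{r̃}` duality the density `h` of `Law_P X` then has `‖h‖_{r̃} ≤ C`; testing against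
`min(h, n)^{r̃-1}` keeps every quantity finite, and `n → ∞` removes the truncation.
-/

open MeasureTheory Filter Set
open scoped ENNReal NNReal Topology

theorem ENNReal.rpow_one_sub_le_of_le_rpow_mul {I C : ℝ≥0∞} {θ : ℝ} (hI : I ≠ ⊤) (hθ : θ < 1)
    (h : I ≤ I ^ θ * C) : I ^ (1 - θ) ≤ C := by
  rcases eq_or_ne I 0 with rfl | hI0
  · simp [ENNReal.zero_rpow_of_pos (sub_pos.2 hθ)]
  · calc I ^ (1 - θ) = I * I ^ (-θ) := by
          rw [sub_eq_add_neg, ENNReal.rpow_add _ _ hI0 hI, ENNReal.rpow_one]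
      _ ≤ I ^ θ * C * I ^ (-θ) := by gcongr
      _ = C := by
          rw [mul_right_comm, ← ENNReal.rpow_add _ _ hI0 hI, add_neg_cancel, ENNReal.rpow_zero,
            one_mul]

theorem Real.holderConjugate_one_add_one_div_sub_one {e : ℝ} (he : 1 < e) :
    e.HolderConjugate (1 + 1 / (e - 1)) :=
  (Real.holderConjugate_iff_eq_conjExponent he).2 (by
    have : e - 1 ≠ 0 := by linarith
    field_simp
    ring)

theorem one_lt_mul_sub_one_div_mul_sub_one {r s : ℝ} (hs : 1 < s) (hsr : s < r) :
    1 < s * (r - 1) / (r * (s - 1)) := by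
  rw [lt_div_iff₀ (by nlinarith)]
  nlinarith

theorem mul_sub_one_div_mul_sub_one_mul_div_sub_one {r s : ℝ} (hr : 1 < r) (hs : 1 < s) :
    s * (r - 1) / (r * (s - 1)) * (r / (r - 1)) = s / (s - 1) := by
  have : r - 1 ≠ 0 := by linarith
  have : s - 1 ≠ 0 := by linarith
  field_simp

namespace MeasureTheory

variable {α : Type*} [MeasurableSpace α]

theorem lintegral_ofReal_rpow_one_div_le_eLpNorm {μ : Measure α}
    {f : α → ℝ} {p : ℝ} (hp : 0 < p) :
    (∫⁻ x, ENNReal.ofReal (f x) ^ p ∂μ) ^ (1 / p) ≤ eLpNorm f (ENNReal.ofReal p) μ := by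
  rw [eLpNorm_eq_lintegral_rpow_enorm_toReal (by simpa using hp) ENNReal.ofReal_ne_top,
    ENNReal.toReal_ofReal hp.le]
  gcongr with x
  exact Real.ofReal_le_enorm (f x)

theorem eLpNorm_toReal_le_lintegral_rpow_one_div {μ : Measure α}
    {f : α → ℝ≥0∞} {p : ℝ} (hp : 0 < p) :
    eLpNorm (fun x => (f x).toReal) (ENNReal.ofReal p) μ ≤ (∫⁻ x, f x ^ p ∂μ) ^ (1 / p) := by
  rw [eLpNorm_eq_lintegral_rpow_enorm_toReal (by simpa using hp) ENNReal.ofReal_ne_top,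
    ENNReal.toReal_ofReal hp.le]
  gcongr with x
  exact (Real.enorm_of_nonneg ENNReal.toReal_nonneg).trans_le ENNReal.ofReal_toReal_le

theorem lintegral_conv_withDensity_le {G : Type*} [AddGroup G] [MeasurableSpace G]
    [MeasurableAdd₂ G] {μ : Measure G} [SFinite μ] [μ.IsAddRightInvariant] {ν : Measure G}
    [IsProbabilityMeasure ν] {ρ : G → ℝ≥0∞} (hρ : AEMeasurable ρ μ) {p q : ℝ}
    (hpq : p.HolderConjugate q) {g : G → ℝ≥0∞} (hg : Measurable g) :
    ∫⁻ z, g z ∂(μ.withDensity ρ ∗ ν)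
      ≤ (∫⁻ x, g x ^ q ∂μ) ^ (1 / q) * (∫⁻ x, ρ x ^ p ∂μ) ^ (1 / p) := by
  rw [Measure.lintegral_conv hg, lintegral_lintegral_swap (by fun_prop)]
  set C := (∫⁻ x, g x ^ q ∂μ) ^ (1 / q) * (∫⁻ x, ρ x ^ p ∂μ) ^ (1 / p)
  refine (lintegral_mono (g := fun _ => C) fun y => ?_).trans_eq (by simp)
  have hgy : AEMeasurable (fun x => g (x + y)) μ := by fun_prop
  calc ∫⁻ x, g (x + y) ∂μ.withDensity ρ = ∫⁻ x, ρ x * g (x + y) ∂μ :=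
        lintegral_withDensity_eq_lintegral_mul₀ hρ hgy
    _ ≤ (∫⁻ x, ρ x ^ p ∂μ) ^ (1 / p) * (∫⁻ x, g (x + y) ^ q ∂μ) ^ (1 / q) :=
        ENNReal.lintegral_mul_le_Lp_mul_Lq μ hpq hρ hgy
    _ = (∫⁻ x, g x ^ q ∂μ) ^ (1 / q) * (∫⁻ x, ρ x ^ p ∂μ) ^ (1 / p) := by
        rw [lintegral_add_right_eq_self (fun x => g x ^ q) y, mul_comm]

theorem Measure.absolutelyContinuous_of_lintegral_le {μ ν : Measure α} {q : ℝ} (hq : 0 < q)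
    {C : ℝ≥0∞}
    (h : ∀ g : α → ℝ≥0∞, Measurable g → ∫⁻ x, g x ∂ν ≤ (∫⁻ x, g x ^ q ∂μ) ^ (1 / q) * C) :
    ν ≪ μ := by
  refine Measure.AbsolutelyContinuous.mk fun s hs hμs => ?_
  have hind : ∀ x, s.indicator (1 : α → ℝ≥0∞) x ^ q = s.indicator 1 x := fun x => by
    by_cases hx : x ∈ s <;> simp [hx, ENNReal.zero_rpow_of_pos hq]
  simpa [hind, lintegral_indicator_one hs, hμs, ENNReal.zero_rpow_of_pos hq,
    ENNReal.zero_rpow_of_pos (inv_pos.2 hq)] using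
    h (s.indicator 1) (measurable_one.indicator hs)

theorem lintegral_rpow_le_of_lintegral_mul_le {μ : Measure α} {f : α → ℝ≥0∞}
    (hf : Measurable f) (hf_fin : ∫⁻ x, f x ∂μ ≠ ⊤)
    {s t : ℝ} (hst : s.HolderConjugate t) {B : ℝ≥0∞}
    (h : ∀ g : α → ℝ≥0∞, Measurable g → ∫⁻ x, g x * f x ∂μ ≤ (∫⁻ x, g x ^ s ∂μ) ^ (1 / s) * B) :
    (∫⁻ x, f x ^ t ∂μ) ^ (1 / t) ≤ B := by
  have ht : 1 < t := hst.symm.lt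
  have htrunc : ∀ n : ℕ, (∫⁻ x, min (f x) n ^ t ∂μ) ^ (1 / t) ≤ B := fun n => by
    set I := ∫⁻ x, min (f x) n ^ t ∂μ
    have hpow : ∀ x, min (f x) n ^ t ≤ min (f x) n ^ (t - 1) * f x := fun x => by
      calc min (f x) n ^ t = min (f x) n ^ (t - 1 + 1) := by rw [sub_add_cancel]
        _ = min (f x) n ^ (t - 1) * min (f x) n := by
            rw [ENNReal.rpow_add_of_nonneg _ _ (by linarith) zero_le_one, ENNReal.rpow_one]
        _ ≤ min (f x) n ^ (t - 1) * f x := by gcongr; exact min_le_left _ _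
    have hI : I ≠ ⊤ := by
      refine ne_top_of_le_ne_top ?_ (lintegral_mono fun x => (hpow x).trans
        (mul_le_mul_left (ENNReal.rpow_le_rpow (min_le_right (f x) n) (by linarith)) (f x)))
      rw [lintegral_const_mul _ hf]
      exact ENNReal.mul_ne_top (ENNReal.rpow_ne_top_of_nonneg (by linarith) (by simp)) hf_fin
    -- testing `g = min(f, n) ^ (t - 1)`, for which `g ^ s = min(f, n) ^ t`
    have hIB : I ≤ I ^ (1 / s) * B := by
      calc I ≤ ∫⁻ x, min (f x) n ^ (t - 1) * f x ∂μ := lintegral_mono hpow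
        _ ≤ (∫⁻ x, (min (f x) n ^ (t - 1)) ^ s ∂μ) ^ (1 / s) * B :=
          h _ ((hf.min measurable_const).pow_const _)
        _ = I ^ (1 / s) * B := by
          simp only [← ENNReal.rpow_mul, hst.symm.sub_one_mul_conj, I]
    have := ENNReal.rpow_one_sub_le_of_le_rpow_mul hI ((div_lt_one hst.pos).2 hst.lt) hIB
    rwa [one_div s, hst.one_sub_inv, ← one_div] at this
  have hlim : Tendsto (fun n : ℕ => ∫⁻ x, min (f x) n ^ t ∂μ) atTop (𝓝 (∫⁻ x, f x ^ t ∂μ)) := by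
    refine lintegral_tendsto_of_tendsto_of_monotone (fun n => by fun_prop)
      (ae_of_all _ fun x m n hmn =>
        ENNReal.rpow_le_rpow (min_le_min_left _ (Nat.cast_le.2 hmn)) (by linarith))
      (ae_of_all _ fun x => ?_)
    have hmin := (tendsto_const_nhds (x := f x)).min ENNReal.tendsto_nat_nhds_top
    rw [min_top_right] at hmin
    exact (ENNReal.continuous_rpow_const.tendsto _).comp hmin
  exact le_of_tendsto ((ENNReal.continuous_rpow_const.tendsto _).comp hlim)
    (Eventually.of_forall htrunc)

theorem lintegral_rnDeriv_rpow_le_of_lintegral_le {μ ν : Measure α} [SigmaFinite μ]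
    [IsFiniteMeasure ν] {s t : ℝ} (hst : s.HolderConjugate t) {B : ℝ≥0∞}
    (h : ∀ g : α → ℝ≥0∞, Measurable g → ∫⁻ x, g x ∂ν ≤ (∫⁻ x, g x ^ s ∂μ) ^ (1 / s) * B) :
    (∫⁻ x, ν.rnDeriv μ x ^ t ∂μ) ^ (1 / t) ≤ B := by
  have hνμ := Measure.absolutelyContinuous_of_lintegral_le hst.pos h
  refine lintegral_rpow_le_of_lintegral_mul_le (Measure.measurable_rnDeriv ν μ)
    (Measure.lintegral_rnDeriv_le.trans_lt (measure_lt_top ν univ)).ne hst fun g hg => ?_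
  simpa only [mul_comm (g _), lintegral_rnDeriv_mul hνμ hg.aemeasurable] using h g hg

theorem lintegral_map_withDensity_le {Ω E : Type*} [MeasurableSpace Ω] [MeasurableSpace E]
    {Q : Measure Ω} {Z : Ω → ℝ≥0∞} (hZ : Measurable Z) {X : Ω → E} (hX : Measurable X)
    {μ : Measure E} {q : ℝ} {A : ℝ≥0∞}
    (hQX : ∀ g : E → ℝ≥0∞, Measurable g →
      ∫⁻ x, g x ∂(Q.map X) ≤ (∫⁻ x, g x ^ q ∂μ) ^ (1 / q) * A)
    {e e' : ℝ} (he : e.HolderConjugate e') {g : E → ℝ≥0∞} (hg : Measurable g) :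
    ∫⁻ x, g x ∂((Q.withDensity Z).map X)
      ≤ (∫⁻ x, g x ^ (e * q) ∂μ) ^ (1 / (e * q))
        * (A ^ (1 / e) * (∫⁻ ω, Z ω ^ e' ∂Q) ^ (1 / e')) := by
  rw [lintegral_map hg hX, lintegral_withDensity_eq_lintegral_mul₀ hZ.aemeasurable (by fun_prop)]
  calc ∫⁻ ω, (Z * fun ω => g (X ω)) ω ∂Q
      ≤ (∫⁻ ω, g (X ω) ^ e ∂Q) ^ (1 / e) * (∫⁻ ω, Z ω ^ e' ∂Q) ^ (1 / e') := by
        simp only [Pi.mul_apply, mul_comm (Z _)]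
        exact ENNReal.lintegral_mul_le_Lp_mul_Lq Q he (by fun_prop) hZ.aemeasurable
    _ = (∫⁻ x, g x ^ e ∂(Q.map X)) ^ (1 / e) * (∫⁻ ω, Z ω ^ e' ∂Q) ^ (1 / e') := by
        rw [lintegral_map (hg.pow_const e) hX]
    _ ≤ ((∫⁻ x, (g x ^ e) ^ q ∂μ) ^ (1 / q) * A) ^ (1 / e)
          * (∫⁻ ω, Z ω ^ e' ∂Q) ^ (1 / e') := by
        gcongr
        exacts [he.one_div_nonneg, hQX _ (hg.pow_const e)]
    _ = _ := by
        simp_rw [ENNReal.mul_rpow_of_nonneg _ _ he.one_div_nonneg, ← ENNReal.rpow_mul]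
        rw [mul_assoc]
        congr 2
        ring

end MeasureTheory

theorem stmt_16_general (d : ℕ) {Ω : Type*} [MeasurableSpace Ω]
    (P Q : Measure Ω) [IsProbabilityMeasure P] [IsProbabilityMeasure Q]
    (hPQ : P ≪ Q)
    (ξ W X : Ω → (Fin d → ℝ))
    (hξ : Measurable ξ) (hW : Measurable W) (hX : Measurable X)
    (hind : ProbabilityTheory.IndepFun ξ W P)
    (r : ℝ) (hr1 : 1 < r)
    (ρ : (Fin d → ℝ) → ℝ)
    (hρ : MemLp ρ (ENNReal.ofReal r) volume)
    (hlaw : P.map ξ = volume.withDensity (fun x => ENNReal.ofReal (ρ x)))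
    (hlawX : Q.map X = P.map (fun ω => ξ ω + W ω)) :
    ∀ rr : ℝ, 1 < rr → rr < r →
      P.map X ≪ volume ∧
      eLpNorm (fun x => ((P.map X).rnDeriv volume x).toReal)
          (ENNReal.ofReal rr) volume
        ≤ (∫⁻ ω, (P.rnDeriv Q ω)
              ^ (1 + 1 / (rr * (r - 1) / (r * (rr - 1)) - 1)) ∂Q)
            ^ ((rr * (r - 1) / (r * (rr - 1)) - 1) / (rr * (r - 1) / (r * (rr - 1))))
          * (eLpNorm ρ (ENNReal.ofReal r) volume)
            ^ (r * (rr - 1) / (rr * (r - 1))) := by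
  intro rr hrr1 hrr
  set e := rr * (r - 1) / (r * (rr - 1))
  have he1 : 1 < e := one_lt_mul_sub_one_div_mul_sub_one hrr1 hrr
  have he := Real.holderConjugate_one_add_one_div_sub_one he1
  have hr : r.HolderConjugate (r / (r - 1)) := .conjExponent hr1
  have hrr' : (rr / (rr - 1)).HolderConjugate rr := (Real.HolderConjugate.conjExponent hrr1).symm
  have hQX : ∀ g : (Fin d → ℝ) → ℝ≥0∞, Measurable g → ∫⁻ x, g x ∂(Q.map X)
      ≤ (∫⁻ x, g x ^ (r / (r - 1)) ∂volume) ^ (1 / (r / (r - 1)))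
        * eLpNorm ρ (ENNReal.ofReal r) volume := fun g hg => by
    have := Measure.isProbabilityMeasure_map (μ := P) hW.aemeasurable
    rw [hlawX, ← Pi.add_def, hind.map_add_eq_map_conv_map hξ hW, hlaw]
    exact (lintegral_conv_withDensity_le hρ.1.aemeasurable.ennreal_ofReal hr hg).trans
      (by gcongr; exact lintegral_ofReal_rpow_one_div_le_eLpNorm (by linarith))
  have hPX : ∀ g : (Fin d → ℝ) → ℝ≥0∞, Measurable g → ∫⁻ x, g x ∂(P.map X)
      ≤ (∫⁻ x, g x ^ (rr / (rr - 1)) ∂volume) ^ (1 / (rr / (rr - 1)))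
        * (eLpNorm ρ (ENNReal.ofReal r) volume ^ (1 / e)
          * (∫⁻ ω, P.rnDeriv Q ω ^ (1 + 1 / (e - 1)) ∂Q) ^ (1 / (1 + 1 / (e - 1)))) := by
    intro g hg
    have := lintegral_map_withDensity_le (Measure.measurable_rnDeriv P Q) hX hQX he hg
    rwa [Measure.withDensity_rnDeriv_eq P Q hPQ,
      mul_sub_one_div_mul_sub_one_mul_div_sub_one hr1 hrr1] at this
  refine ⟨Measure.absolutelyContinuous_of_lintegral_le hrr'.pos hPX,
    (eLpNorm_toReal_le_lintegral_rpow_one_div (by linarith)).trans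
      ((lintegral_rnDeriv_rpow_le_of_lintegral_le hrr' hPX).trans_eq ?_)⟩
  rw [mul_comm]
  congr 2
  · rw [one_add_div (by linarith), sub_add_cancel, one_div_div]
  · simp only [e, one_div_div]

/-- Propagation of integrability of the law via a Girsanov-type change of measure:
if `ξ` has density `ρ ∈ L^r`, `W` is independent of `ξ` under `P`, and `Q ∼ P` is such
that `Law_Q(X) = Law_P(ξ + W)` with all moments of `dP/dQ` finite under `Q`, then for
every `rr ∈ (1,r)` the law of `X` under `P` has a density in `L^{rr}`, with the explicit
bound `‖Law_P(X)‖_{L^{rr}} ≤ E_Q[(dP/dQ)^{1+1/ε}]^{ε/(1+ε)} ‖ρ‖_{L^r}^{1/(1+ε)}`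
where `1 + ε = rr(r−1)/(r(rr−1))` (i.e. `r'(1+ε) = rr'` for the conjugate exponents). -/
theorem stmt_16 (d : ℕ) {Ω : Type*} [MeasurableSpace Ω]
    (P Q : Measure Ω) [IsProbabilityMeasure P] [IsProbabilityMeasure Q]
    (hPQ : P ≪ Q) (hQP : Q ≪ P)
    (ξ W X : Ω → (Fin d → ℝ))
    (hξ : Measurable ξ) (hW : Measurable W) (hX : Measurable X)
    (hind : ProbabilityTheory.IndepFun ξ W P)
    (r : ℝ) (hr1 : 1 < r)
    (ρ : (Fin d → ℝ) → ℝ) (hρ0 : ∀ x, 0 ≤ ρ x)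
    (hρ : MemLp ρ (ENNReal.ofReal r) volume)
    (hlaw : P.map ξ = volume.withDensity (fun x => ENNReal.ofReal (ρ x)))
    (hlawX : Q.map X = P.map (fun ω => ξ ω + W ω))
    (hmom : ∀ m : ℕ, ∫⁻ ω, (P.rnDeriv Q ω) ^ m ∂Q < ⊤) :
    ∀ rr : ℝ, 1 < rr → rr < r →
      P.map X ≪ volume ∧
      eLpNorm (fun x => ((P.map X).rnDeriv volume x).toReal)
          (ENNReal.ofReal rr) volume
        ≤ (∫⁻ ω, (P.rnDeriv Q ω)
              ^ (1 + 1 / (rr * (r - 1) / (r * (rr - 1)) - 1)) ∂Q)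
            ^ ((rr * (r - 1) / (r * (rr - 1)) - 1) / (rr * (r - 1) / (r * (rr - 1))))
          * (eLpNorm ρ (ENNReal.ofReal r) volume)
            ^ (r * (rr - 1) / (rr * (r - 1))) :=
  stmt_16_general d P Q hPQ ξ W X hξ hW hX hind r hr1 ρ hρ hlaw hlawX
end
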